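/- arXiv:2504.16581 — 6 statements merged into one kernel-verified Lean document; each statement's English description precedes it below -/
import Mathlib

section
/- Let A be a continuous linear map on a finite-dimensional real inner product space E with ‖A^k‖ ≤ κ·(1 − γ)^k for all natural numbers k (κ > 0, γ ∈ (0,1]), let b ∈ E, let x_u ∈ E satisfy x_u = A x_u + b, and let (x_t)_{t≥1} satisfy x_{t+1} = A x_t + b for all t ≥ 1, with ‖x_u‖ ≤ D and ‖x_t‖ ≤ D for all t ∈ {1,…,T}. Let (f_t)_{t=1}^T be real-valued functions on E, each convex, differentiable, and satisfying ‖∇f_t(y)‖ ≤ L·D whenever ‖y‖ ≤ D (L > 0, D > 0). Then Σ_{t=1}^T (f_t(x_t) − f_t(x_u)) ≤ 2κ·L·D²/γ and Σ_{t=1}^T (f_t(x_u) − f_t(x_t)) ≤ 2κ·L·D²/γ. -/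
open InnerProductSpace in
lemma norm_fderiv_eq_norm_gradient {E : Type*} [NormedAddCommGroup E] [InnerProductSpace ℝ E]
    [CompleteSpace E] (f : E → ℝ) (y : E) : ‖fderiv ℝ f y‖ = ‖gradient f y‖ := by
  rw [gradient, LinearIsometryEquiv.norm_map]

lemma geom_sum_le_one_div' {r γ : ℝ} (hγ : 0 < γ) (hr : r = 1 - γ) (hr0 : 0 ≤ r) (T : ℕ) :
    ∑ i ∈ Finset.range T, r ^ i ≤ 1 / γ := by
  rw [le_div_iff₀ hγ]
  have h := geom_sum_mul r T
  have h2 : (0:ℝ) ≤ r ^ T := pow_nonneg hr0 T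
  nlinarith [h]

/-- cost gap between the constant-input trajectory and its steady state, in
both directions: `Σ_{t=1}^T (f_t(x_t) - f_t(x_u)) ≤ 2κLD²/γ` and
`Σ_{t=1}^T (f_t(x_u) - f_t(x_t)) ≤ 2κLD²/γ`. -/
theorem constant_input_cost_gap {E : Type*} [NormedAddCommGroup E] [InnerProductSpace ℝ E]
    [FiniteDimensional ℝ E] {κ γ L D : ℝ} (hκ : 0 < κ) (hγ : 0 < γ) (hγ1 : γ ≤ 1)
    (hL : 0 < L) (hD : 0 < D)
    (A : E →L[ℝ] E) (hAk : ∀ k : ℕ, ‖A ^ k‖ ≤ κ * (1 - γ) ^ k)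
    (b : E) (xu : E) (hxu : xu = A xu + b)
    (x : ℕ → E) (hx : ∀ t : ℕ, 1 ≤ t → x (t + 1) = A (x t) + b)
    (T : ℕ) (hT : 1 ≤ T)
    (hxubd : ‖xu‖ ≤ D) (hxbd : ∀ t ∈ Finset.Icc 1 T, ‖x t‖ ≤ D)
    (f : ℕ → E → ℝ)
    (hconv : ∀ t ∈ Finset.Icc 1 T, ConvexOn ℝ Set.univ (f t))
    (hdiff : ∀ t ∈ Finset.Icc 1 T, Differentiable ℝ (f t))
    (hgrad : ∀ t ∈ Finset.Icc 1 T, ∀ y : E, ‖y‖ ≤ D → ‖gradient (f t) y‖ ≤ L * D) :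
    (∑ t ∈ Finset.Icc 1 T, (f t (x t) - f t xu)) ≤ 2 * κ * L * D ^ 2 / γ ∧
      (∑ t ∈ Finset.Icc 1 T, (f t xu - f t (x t))) ≤ 2 * κ * L * D ^ 2 / γ := by
  have h1mem : (1:ℕ) ∈ Finset.Icc 1 T := by simp [hT]
  -- trajectory formula
  have hxform : ∀ t : ℕ, 1 ≤ t → x t - xu = (A ^ (t - 1)) (x 1 - xu) := by
    intro t ht
    induction t with
    | zero => omega
    | succ n ih =>
      rcases Nat.eq_zero_or_pos n with hn | hn
      · subst hn; simp
      · have key : x (n + 1) - xu = A (x n - xu) := by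
          rw [hx n hn, map_sub]
          conv_lhs => rw [hxu]
          abel
        rw [key, ih hn, ← ContinuousLinearMap.mul_apply, ← pow_succ']
        congr 2
        omega
  -- norm bound on difference
  have hdiffbd : ∀ t ∈ Finset.Icc 1 T, ‖x t - xu‖ ≤ κ * (1 - γ) ^ (t - 1) * (2 * D) := by
    intro t htm
    have ht1 : 1 ≤ t := (Finset.mem_Icc.mp htm).1
    rw [hxform t ht1]
    calc ‖(A ^ (t - 1)) (x 1 - xu)‖ ≤ ‖A ^ (t - 1)‖ * ‖x 1 - xu‖ :=
          (A ^ (t - 1)).le_opNorm _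
      _ ≤ (κ * (1 - γ) ^ (t - 1)) * (2 * D) := by
          apply mul_le_mul (hAk _) _ (norm_nonneg _) _
          · calc ‖x 1 - xu‖ ≤ ‖x 1‖ + ‖xu‖ := norm_sub_le _ _
              _ ≤ D + D := add_le_add (hxbd 1 h1mem) hxubd
              _ = 2 * D := by ring
          · exact mul_nonneg hκ.le (pow_nonneg (by linarith) _)
  -- Lipschitz bound
  have hlip : ∀ t ∈ Finset.Icc 1 T, |f t (x t) - f t xu| ≤ L * D * ‖x t - xu‖ := by
    intro t htm
    have h1 : ∀ y ∈ Metric.closedBall (0:E) D, DifferentiableAt ℝ (f t) y :=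
      fun y _ => hdiff t htm y
    have h2 : ∀ y ∈ Metric.closedBall (0:E) D, ‖fderiv ℝ (f t) y‖ ≤ L * D := by
      intro y hy
      rw [norm_fderiv_eq_norm_gradient]
      exact hgrad t htm y (by simpa using hy)
    have := (convex_closedBall (0:E) D).norm_image_sub_le_of_norm_fderiv_le h1 h2
      (by simpa using hxubd) (by simpa using hxbd t htm)
    simpa [Real.norm_eq_abs] using this
  -- per-term bound
  have hterm : ∀ t ∈ Finset.Icc 1 T, |f t (x t) - f t xu| ≤
      (L * D * (κ * (2 * D))) * (1 - γ) ^ (t - 1) := by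
    intro t htm
    calc |f t (x t) - f t xu| ≤ L * D * ‖x t - xu‖ := hlip t htm
      _ ≤ L * D * (κ * (1 - γ) ^ (t - 1) * (2 * D)) := by
          apply mul_le_mul_of_nonneg_left (hdiffbd t htm) (by positivity)
      _ = (L * D * (κ * (2 * D))) * (1 - γ) ^ (t - 1) := by ring
  -- geometric sum bound
  have hr0 : (0:ℝ) ≤ 1 - γ := by linarith
  have hgeom : ∑ t ∈ Finset.Icc 1 T, (1 - γ) ^ (t - 1) ≤ 1 / γ := by
    have hre : ∑ t ∈ Finset.Icc 1 T, (1 - γ) ^ (t - 1)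
        = ∑ i ∈ Finset.range T, (1 - γ) ^ i := by
      rw [← Finset.Ico_add_one_right_eq_Icc, Finset.sum_Ico_eq_sum_range]
      simp
    rw [hre]
    exact geom_sum_le_one_div' hγ rfl hr0 T
  -- main bound on sum of absolute values
  have hmain : ∑ t ∈ Finset.Icc 1 T, |f t (x t) - f t xu| ≤ 2 * κ * L * D ^ 2 / γ := by
    calc ∑ t ∈ Finset.Icc 1 T, |f t (x t) - f t xu|
        ≤ ∑ t ∈ Finset.Icc 1 T, (L * D * (κ * (2 * D))) * (1 - γ) ^ (t - 1) :=
          Finset.sum_le_sum hterm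
      _ = (L * D * (κ * (2 * D))) * ∑ t ∈ Finset.Icc 1 T, (1 - γ) ^ (t - 1) := by
          rw [Finset.mul_sum]
      _ ≤ (L * D * (κ * (2 * D))) * (1 / γ) := by
          apply mul_le_mul_of_nonneg_left hgeom (by positivity)
      _ = 2 * κ * L * D ^ 2 / γ := by ring
  constructor
  · calc ∑ t ∈ Finset.Icc 1 T, (f t (x t) - f t xu)
        ≤ ∑ t ∈ Finset.Icc 1 T, |f t (x t) - f t xu| :=
          Finset.sum_le_sum fun t _ => le_abs_self _
      _ ≤ _ := hmain
  · calc ∑ t ∈ Finset.Icc 1 T, (f t xu - f t (x t))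
        ≤ ∑ t ∈ Finset.Icc 1 T, |f t (x t) - f t xu| :=
          Finset.sum_le_sum fun t _ => by rw [abs_sub_comm]; exact le_abs_self _
      _ ≤ _ := hmain
end

section
/- (Lemma 1: equivalence of regret benchmarks.) Let A be a (κ,γ)-strongly stable continuous linear map on a finite-dimensional real inner product space E, B : F →L[ℝ] E a continuous linear map from a finite-dimensional real inner product space F, U ⊆ F a set of admissible inputs, and X = {x ∈ E : ∃ u ∈ U, x = A x + B u} the steady-state manifold. Let (f_t)_{t=1}^T be convex differentiable real-valued functions on E with ‖∇f_t(y)‖ ≤ L·D whenever ‖y‖ ≤ D. Fix an initial state x_1 with ‖x_1‖ ≤ D, and for each u ∈ U let (x_t^u)_{t=1}^T be the trajectory with x_1^u = x_1 and x_{t+1}^u = A x_t^u + B u; assume ‖x_t^u‖ ≤ D for all t and u ∈ U, and ‖x‖ ≤ D for all x ∈ X. Suppose x* ∈ X minimizes Σ_{t=1}^T f_t(x) over x ∈ X, attained at input u* ∈ U (so x* = A x* + B u*). Then Σ_{t=1}^T f_t(x_t^{u*}) − Σ_{t=1}^T f_t(x*) ≤ 2κ·L·D²/γ; consequently, for any state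 sequence (x_t)_{t=1}^T, the constant-input regret R_u(T) = Σ_t f_t(x_t) − min_{u∈U} Σ_t f_t(x_t^u) and the steady-state regret R_x(T) = Σ_t f_t(x_t) − Σ_t f_t(x*) satisfy R_u(T) − R_x(T) ≤ 2κ·L·D²/γ. -/
/-- A continuous linear map `A` is `(κ,γ)`-strongly stable if `A = H ∘ J ∘ H⁻¹` for some
invertible continuous linear map `H` and continuous linear map `J` with `‖J‖ ≤ 1 - γ` and
`‖H‖·‖H⁻¹‖ ≤ κ`. -/
def StronglyStable {E : Type*} [NormedAddCommGroup E] [InnerProductSpace ℝ E]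
    (κ γ : ℝ) (A : E →L[ℝ] E) : Prop :=
  ∃ (H : E ≃L[ℝ] E) (J : E →L[ℝ] E),
    A = (H : E →L[ℝ] E).comp (J.comp (H.symm : E →L[ℝ] E)) ∧
      ‖J‖ ≤ 1 - γ ∧ ‖(H : E →L[ℝ] E)‖ * ‖(H.symm : E →L[ℝ] E)‖ ≤ κ

/-- Lemma 1: equivalence of the constant-input and steady-state regret
benchmarks, up to an additive `2κLD²/γ` term. -/
theorem regret_benchmark_equivalence {E F : Type*}
    [NormedAddCommGroup E] [InnerProductSpace ℝ E] [FiniteDimensional ℝ E]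
    [NormedAddCommGroup F] [InnerProductSpace ℝ F] [FiniteDimensional ℝ F]
    {κ γ L D : ℝ} (hκ : 0 < κ) (hγ : 0 < γ) (hγ1 : γ ≤ 1) (hL : 0 < L) (hD : 0 < D)
    {A : E →L[ℝ] E} (hA : StronglyStable κ γ A) (B : F →L[ℝ] E) (U : Set F)
    (T : ℕ) (hT : 1 ≤ T) (f : ℕ → E → ℝ)
    (hconv : ∀ t ∈ Finset.Icc 1 T, ConvexOn ℝ Set.univ (f t))
    (hdiff : ∀ t ∈ Finset.Icc 1 T, Differentiable ℝ (f t))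
    (hgrad : ∀ t ∈ Finset.Icc 1 T, ∀ y : E, ‖y‖ ≤ D → ‖gradient (f t) y‖ ≤ L * D)
    (x₁ : E) (hx₁ : ‖x₁‖ ≤ D)
    (xtraj : F → ℕ → E)
    (htraj1 : ∀ u ∈ U, xtraj u 1 = x₁)
    (htraj : ∀ u ∈ U, ∀ t : ℕ, 1 ≤ t → xtraj u (t + 1) = A (xtraj u t) + B u)
    (htrajbd : ∀ u ∈ U, ∀ t : ℕ, 1 ≤ t → ‖xtraj u t‖ ≤ D)
    (hXbd : ∀ xx ∈ {xx : E | ∃ u ∈ U, xx = A xx + B u}, ‖xx‖ ≤ D)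
    (xs : E) (us : F) (hus : us ∈ U) (hxs : xs = A xs + B us)
    (hmin : ∀ xx ∈ {xx : E | ∃ u ∈ U, xx = A xx + B u},
      ∑ t ∈ Finset.Icc 1 T, f t xs ≤ ∑ t ∈ Finset.Icc 1 T, f t xx) :
    ((∑ t ∈ Finset.Icc 1 T, f t (xtraj us t)) - ∑ t ∈ Finset.Icc 1 T, f t xs ≤
        2 * κ * L * D ^ 2 / γ) ∧
      ∀ x : ℕ → E,
        ((∑ t ∈ Finset.Icc 1 T, f t (x t)) -
            sInf {c : ℝ | ∃ u ∈ U, c = ∑ t ∈ Finset.Icc 1 T, f t (xtraj u t)}) -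
          ((∑ t ∈ Finset.Icc 1 T, f t (x t)) - ∑ t ∈ Finset.Icc 1 T, f t xs) ≤
            2 * κ * L * D ^ 2 / γ := by
  obtain ⟨H, J, hAeq, hJ, hH⟩ := hA
  have hJ0 : (0:ℝ) ≤ 1 - γ := by
    have := norm_nonneg J; linarith
  have hJlt : ‖J‖ < 1 := lt_of_le_of_lt hJ (by linarith)
  -- pointwise formula for powers of A
  have hApow : ∀ (n : ℕ) (v : E), (A ^ n) v = H ((J ^ n) (H.symm v)) := by
    intro n
    induction n with
    | zero => intro v; simp
    | succ n ih =>
      intro v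
      rw [pow_succ', pow_succ', ContinuousLinearMap.mul_apply, ih,
        ContinuousLinearMap.mul_apply, hAeq]
      simp
  have hAnbd : ∀ (n : ℕ) (v : E), ‖(A ^ n) v‖ ≤ κ * (1 - γ) ^ n * ‖v‖ := by
    intro n v
    rw [hApow]
    have hJn : ∀ (m : ℕ) (w : E), ‖(J ^ m) w‖ ≤ ‖J‖ ^ m * ‖w‖ := by
      intro m
      induction m with
      | zero => intro w; simp
      | succ m ih =>
        intro w
        rw [pow_succ', ContinuousLinearMap.mul_apply]
        calc ‖J ((J ^ m) w)‖ ≤ ‖J‖ * ‖(J ^ m) w‖ := J.le_opNorm _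
          _ ≤ ‖J‖ * (‖J‖ ^ m * ‖w‖) := mul_le_mul_of_nonneg_left (ih w) (norm_nonneg _)
          _ = ‖J‖ ^ (m + 1) * ‖w‖ := by ring
    calc ‖H ((J ^ n) (H.symm v))‖ ≤ ‖(H : E →L[ℝ] E)‖ * ‖(J ^ n) (H.symm v)‖ :=
          (H : E →L[ℝ] E).le_opNorm _
      _ ≤ ‖(H : E →L[ℝ] E)‖ * (‖J‖ ^ n * ‖H.symm v‖) :=
          mul_le_mul_of_nonneg_left (hJn n _) (norm_nonneg _)
      _ ≤ ‖(H : E →L[ℝ] E)‖ * (‖J‖ ^ n * (‖(H.symm : E →L[ℝ] E)‖ * ‖v‖)) :=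
          mul_le_mul_of_nonneg_left
            (mul_le_mul_of_nonneg_left ((H.symm : E →L[ℝ] E).le_opNorm v)
              (pow_nonneg (norm_nonneg _) n)) (norm_nonneg _)
      _ = ‖(H : E →L[ℝ] E)‖ * ‖(H.symm : E →L[ℝ] E)‖ * (‖J‖ ^ n * ‖v‖) := by ring
      _ ≤ κ * ((1 - γ) ^ n * ‖v‖) := by
          have h1 : ‖J‖ ^ n ≤ (1 - γ) ^ n := pow_le_pow_left₀ (norm_nonneg _) hJ n
          exact mul_le_mul hH (mul_le_mul_of_nonneg_right h1 (norm_nonneg v))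
            (by positivity) hκ.le
      _ = κ * (1 - γ) ^ n * ‖v‖ := by ring
  -- geometric sum bound
  have hgeom : ∑ t ∈ Finset.Icc 1 T, (1 - γ) ^ (t - 1) ≤ 1 / γ := by
    have h1 : ∑ t ∈ Finset.Icc 1 T, (1 - γ) ^ (t - 1)
        = ∑ i ∈ Finset.range T, (1 - γ) ^ i := by
      rw [← Finset.Ico_add_one_right_eq_Icc, Finset.sum_Ico_eq_sum_range]
      simp
    rw [h1]
    have h2 : ∑ i ∈ Finset.range T, (1 - γ) ^ i ≤ ∑' i : ℕ, (1 - γ) ^ i := by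
      apply Summable.sum_le_tsum
      · intro i _; exact pow_nonneg hJ0 i
      · exact summable_geometric_of_lt_one hJ0 (by linarith)
    rw [tsum_geometric_of_lt_one hJ0 (by linarith)] at h2
    calc _ ≤ (1 - (1 - γ))⁻¹ := h2
      _ = 1 / γ := by rw [one_div]; ring_nf
  -- Lipschitz-type bound from the gradient bound
  have hlip : ∀ t ∈ Finset.Icc 1 T, ∀ a b : E, ‖a‖ ≤ D → ‖b‖ ≤ D →
      |f t a - f t b| ≤ L * D * ‖a - b‖ := by
    intro t ht a b ha hb
    rw [← Real.norm_eq_abs]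
    apply Convex.norm_image_sub_le_of_norm_fderiv_le
      (fun x _ => (hdiff t ht) x)
      (fun x hx => by
        have : ‖fderiv ℝ (f t) x‖ = ‖gradient (f t) x‖ := by simp [gradient]
        rw [this]
        exact hgrad t ht x (by simpa [Metric.mem_closedBall, dist_eq_norm] using hx))
      (convex_closedBall (0:E) D)
      (by simpa [Metric.mem_closedBall, dist_eq_norm] using hb)
      (by simpa [Metric.mem_closedBall, dist_eq_norm] using ha)
  -- the key estimate
  have key : ∀ u ∈ U, ∀ xu : E, xu = A xu + B u →
      |(∑ t ∈ Finset.Icc 1 T, f t (xtraj u t)) - ∑ t ∈ Finset.Icc 1 T, f t xu|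
        ≤ 2 * κ * L * D ^ 2 / γ := by
    intro u hu xu hxu
    have hxuX : xu ∈ {xx : E | ∃ u ∈ U, xx = A xx + B u} := ⟨u, hu, hxu⟩
    have hxuD : ‖xu‖ ≤ D := hXbd xu hxuX
    have hAxu : A xu = xu - B u := by
      rw [eq_sub_iff_add_eq]; exact hxu.symm
    have herr : ∀ t : ℕ, 1 ≤ t → xtraj u t - xu = (A ^ (t - 1)) (x₁ - xu) := by
      refine Nat.le_induction ?_ ?_
      · simp [htraj1 u hu]
      · intro n hn ih
        rw [htraj u hu n hn]
        have h2 : A (xtraj u n) + B u - xu = A (xtraj u n - xu) := by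
          rw [map_sub, hAxu]; abel
        rw [h2, ih, show n + 1 - 1 = (n - 1) + 1 from by omega, pow_succ',
          ContinuousLinearMap.mul_apply]
    have hterm : ∀ t ∈ Finset.Icc 1 T,
        |f t (xtraj u t) - f t xu| ≤ 2 * κ * L * D ^ 2 * (1 - γ) ^ (t - 1) := by
      intro t ht
      have ht1 : 1 ≤ t := (Finset.mem_Icc.mp ht).1
      have h1 : ‖xtraj u t - xu‖ ≤ κ * (1 - γ) ^ (t - 1) * (2 * D) := by
        rw [herr t ht1]
        calc ‖(A ^ (t - 1)) (x₁ - xu)‖ ≤ κ * (1 - γ) ^ (t - 1) * ‖x₁ - xu‖ :=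
              hAnbd (t - 1) _
          _ ≤ κ * (1 - γ) ^ (t - 1) * (2 * D) := by
              refine mul_le_mul_of_nonneg_left ?_ (mul_nonneg hκ.le (pow_nonneg hJ0 _))
              calc ‖x₁ - xu‖ ≤ ‖x₁‖ + ‖xu‖ := norm_sub_le _ _
                _ ≤ 2 * D := by linarith
      calc |f t (xtraj u t) - f t xu| ≤ L * D * ‖xtraj u t - xu‖ :=
            hlip t ht _ _ (htrajbd u hu t ht1) hxuD
        _ ≤ L * D * (κ * (1 - γ) ^ (t - 1) * (2 * D)) :=
            mul_le_mul_of_nonneg_left h1 (mul_nonneg hL.le hD.le)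
        _ = 2 * κ * L * D ^ 2 * (1 - γ) ^ (t - 1) := by ring
    calc |(∑ t ∈ Finset.Icc 1 T, f t (xtraj u t)) - ∑ t ∈ Finset.Icc 1 T, f t xu|
        = |∑ t ∈ Finset.Icc 1 T, (f t (xtraj u t) - f t xu)| := by
          rw [Finset.sum_sub_distrib]
      _ ≤ ∑ t ∈ Finset.Icc 1 T, |f t (xtraj u t) - f t xu| :=
          Finset.abs_sum_le_sum_abs _ _
      _ ≤ ∑ t ∈ Finset.Icc 1 T, 2 * κ * L * D ^ 2 * (1 - γ) ^ (t - 1) :=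
          Finset.sum_le_sum hterm
      _ = 2 * κ * L * D ^ 2 * ∑ t ∈ Finset.Icc 1 T, (1 - γ) ^ (t - 1) := by
          rw [Finset.mul_sum]
      _ ≤ 2 * κ * L * D ^ 2 * (1 / γ) :=
          mul_le_mul_of_nonneg_left hgeom (by positivity)
      _ = 2 * κ * L * D ^ 2 / γ := by ring
  have part1 : (∑ t ∈ Finset.Icc 1 T, f t (xtraj us t)) - ∑ t ∈ Finset.Icc 1 T, f t xs ≤
      2 * κ * L * D ^ 2 / γ :=
    le_trans (le_abs_self _) (key us hus xs hxs)
  refine ⟨part1, ?_⟩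
  intro x
  have goal2 : (∑ t ∈ Finset.Icc 1 T, f t xs) - 2 * κ * L * D ^ 2 / γ ≤
      sInf {c : ℝ | ∃ u ∈ U, c = ∑ t ∈ Finset.Icc 1 T, f t (xtraj u t)} := by
    apply le_csInf
    · exact ⟨_, us, hus, rfl⟩
    · rintro c ⟨u, hu, rfl⟩
      -- construct steady state for u
      have hexists : ∃ xu : E, xu = A xu + B u := by
        have hiu : IsUnit (1 - J) := isUnit_one_sub_of_norm_lt_one hJlt
        obtain ⟨v, hv⟩ : ∃ v : E →L[ℝ] E, (1 - J) * v = 1 := by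
          exact ⟨↑hiu.unit⁻¹, hiu.mul_val_inv⟩
        refine ⟨H (v (H.symm (B u))), ?_⟩
        have h1 : v (H.symm (B u)) - J (v (H.symm (B u))) = H.symm (B u) := by
          have h0 := congrArg (fun (W : E →L[ℝ] E) => W (H.symm (B u))) hv
          simpa [ContinuousLinearMap.mul_apply, ContinuousLinearMap.sub_apply] using h0
        have hAz : A (H (v (H.symm (B u)))) = H (J (v (H.symm (B u)))) := by
          rw [hAeq]; simp
        have h2 : H (v (H.symm (B u))) - H (J (v (H.symm (B u)))) = B u := by
          rw [← map_sub, h1]; simp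
        rw [hAz]
        exact sub_eq_iff_eq_add'.mp h2
      obtain ⟨xu, hxu⟩ := hexists
      have h3 := key u hu xu hxu
      have h4 := hmin xu ⟨u, hu, hxu⟩
      have h5 : (∑ t ∈ Finset.Icc 1 T, f t xu) - ∑ t ∈ Finset.Icc 1 T, f t (xtraj u t)
          ≤ 2 * κ * L * D ^ 2 / γ := by
        have := neg_abs_le ((∑ t ∈ Finset.Icc 1 T, f t (xtraj u t)) -
          ∑ t ∈ Finset.Icc 1 T, f t xu)
        linarith
      linarith
  linarith [goal2]
end

section
/- (Tracking-error norm bound.) Let A be a (κ,γ)-strongly stable continuous linear map on a finite-dimensional real inner product space E. Let η > 0, L > 0, D > 0, and let (z_t)_{t≥1}, (x_t)_{t≥1} be sequences in E such that x_{t+1} = A x_t + (I − A) z_t for all t ≥ 1, ‖x_1‖ ≤ D, ‖z_t‖ ≤ D for all t, and ‖z_{t−τ} − z_t‖ ≤ η·τ·L·D for all t ≥ 1 and 1 ≤ τ ≤ t − 1. Then for every t ≥ 1, ‖x_t − z_t‖ ≤ 2·D·κ·(1 − γ)^{t−1} + 2·η·κ²·L·D/γ². -/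
open Finset

theorem eq_pow_smul_add_sum_of_succ {S M : Type*} [Monoid S] [AddCommMonoid M]
    [DistribMulAction S M] {a : S} {u f : ℕ → M} (hu : ∀ k, u (k + 1) = a • u k + f k) (n : ℕ) :
    u n = a ^ n • u 0 + ∑ i ∈ range n, a ^ i • f (n - 1 - i) := by
  induction n with
  | zero => simp
  | succ n ih =>
    rw [hu, ih, smul_add, smul_sum, sum_range_succ', pow_succ', mul_smul, add_assoc]
    simp only [← mul_smul, ← pow_succ', Nat.add_sub_cancel, Nat.sub_zero, pow_zero, one_smul,
      Nat.sub_sub, Nat.add_comm 1]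

theorem sum_range_succ_mul_pow_le {r : ℝ} (hr₀ : 0 ≤ r) (hr₁ : r < 1) (n : ℕ) :
    ∑ i ∈ range n, ((i : ℝ) + 1) * r ^ i ≤ 1 / (1 - r) ^ 2 := by
  have hsum := hasSum_choose_mul_geometric_of_norm_lt_one 1
    (by rwa [Real.norm_of_nonneg hr₀] : ‖r‖ < 1)
  simp only [Nat.choose_one_right, Nat.cast_add, Nat.cast_one] at hsum
  exact sum_le_hasSum _ (fun i _ => by positivity) hsum

namespace StronglyStable

variable {E : Type*} [NormedAddCommGroup E] [InnerProductSpace ℝ E] {κ γ : ℝ} {A : E →L[ℝ] E}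

theorem norm_pow_le (hA : StronglyStable κ γ A) (k : ℕ) : ‖A ^ k‖ ≤ κ * (1 - γ) ^ k := by
  obtain ⟨H, J, rfl, hJ, hH⟩ := hA
  have hconj : ((H : E →L[ℝ] E).comp (J.comp (H.symm : E →L[ℝ] E))) ^ k =
      (H : E →L[ℝ] E).comp ((J ^ k).comp (H.symm : E →L[ℝ] E)) := by
    induction k with
    | zero => ext; simp
    | succ k ih => ext; simp [pow_succ', ih]
  have hJk : ‖J ^ k‖ ≤ (1 - γ) ^ k := by
    rcases k.eq_zero_or_pos with rfl | hk
    · rw [pow_zero, pow_zero]; exact ContinuousLinearMap.norm_id_le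
    · exact (norm_pow_le' J hk).trans (pow_le_pow_left₀ (norm_nonneg J) hJ k)
  rw [hconj]
  calc _ ≤ ‖(H : E →L[ℝ] E)‖ * (‖J ^ k‖ * ‖(H.symm : E →L[ℝ] E)‖) :=
        (ContinuousLinearMap.opNorm_comp_le _ _).trans
          (mul_le_mul_of_nonneg_left (ContinuousLinearMap.opNorm_comp_le _ _) (norm_nonneg _))
    _ = ‖(H : E →L[ℝ] E)‖ * ‖(H.symm : E →L[ℝ] E)‖ * ‖J ^ k‖ := by ring
    _ ≤ κ * (1 - γ) ^ k := mul_le_mul hH hJk (norm_nonneg _)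
      ((mul_nonneg (norm_nonneg _) (norm_nonneg _)).trans hH)

theorem nonneg (hA : StronglyStable κ γ A) : 0 ≤ κ := by
  simpa using (norm_nonneg _).trans (hA.norm_pow_le 0)

theorem norm_one_sub_le (hA : StronglyStable κ γ A) (hγ : 0 ≤ γ) : ‖1 - A‖ ≤ 2 * κ :=
  calc ‖1 - A‖ ≤ ‖A ^ 0‖ + ‖A ^ 1‖ := by simpa using norm_sub_le (1 : E →L[ℝ] E) A
    _ ≤ κ * (1 - γ) ^ 0 + κ * (1 - γ) ^ 1 := add_le_add (hA.norm_pow_le 0) (hA.norm_pow_le 1)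
    _ ≤ 2 * κ := by nlinarith [hA.nonneg]

theorem norm_pow_apply_one_sub_le (hA : StronglyStable κ γ A) (hγ : 0 ≤ γ) (k : ℕ) (v : E) :
    ‖(A ^ k) ((1 - A) v)‖ ≤ 2 * κ ^ 2 * (1 - γ) ^ k * ‖v‖ :=
  calc ‖(A ^ k) ((1 - A) v)‖ ≤ ‖A ^ k‖ * (‖1 - A‖ * ‖v‖) :=
        (ContinuousLinearMap.le_opNorm _ _).trans
          (mul_le_mul_of_nonneg_left (ContinuousLinearMap.le_opNorm _ _) (norm_nonneg _))
    _ ≤ κ * (1 - γ) ^ k * (2 * κ * ‖v‖) :=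
        mul_le_mul (hA.norm_pow_le k) (by gcongr; exact hA.norm_one_sub_le hγ)
          (by positivity) ((norm_nonneg _).trans (hA.norm_pow_le k))
    _ = 2 * κ ^ 2 * (1 - γ) ^ k * ‖v‖ := by ring

end StronglyStable

theorem sub_eq_pow_apply_add_sum {E : Type*} [NormedAddCommGroup E] [NormedSpace ℝ E]
    {A : E →L[ℝ] E} {x z : ℕ → E}
    (hx : ∀ t : ℕ, 1 ≤ t → x (t + 1) = A (x t) + ((1 : E →L[ℝ] E) - A) (z t)) (w : E) (n : ℕ) :
    x (n + 1) - w = (A ^ n) (x 1 - w) + ∑ i ∈ range n, (A ^ i) ((1 - A) (z (n - i) - w)) := by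
  have hrec : ∀ k, x (k + 1 + 1) - w = A • (x (k + 1) - w) + (1 - A) (z (k + 1) - w) := by
    intro k
    rw [hx (k + 1) k.succ_pos, ContinuousLinearMap.smul_def]
    simp only [map_sub, sub_apply, one_apply_eq_self]
    abel
  rw [eq_pow_smul_add_sum_of_succ (u := fun k => x (k + 1) - w) hrec n,
    ContinuousLinearMap.smul_def]
  congr 1
  refine sum_congr rfl fun i hi => ?_
  rw [ContinuousLinearMap.smul_def, show n - 1 - i + 1 = n - i by grind]

theorem tracking_error_norm_bound_general {E : Type*} [NormedAddCommGroup E] [InnerProductSpace ℝ E]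
    {κ γ η L D : ℝ} (hγ : 0 < γ) (hγ1 : γ ≤ 1)
    (hη : 0 < η) (hL : 0 < L) (hD : 0 < D)
    {A : E →L[ℝ] E} (hA : StronglyStable κ γ A)
    (x z : ℕ → E)
    (hx : ∀ t : ℕ, 1 ≤ t → x (t + 1) = A (x t) + ((1 : E →L[ℝ] E) - A) (z t))
    (hx1 : ‖x 1‖ ≤ D) (hzbd : ∀ t : ℕ, 1 ≤ t → ‖z t‖ ≤ D)
    (hzdiff : ∀ t : ℕ, 1 ≤ t → ∀ τ : ℕ, 1 ≤ τ → τ ≤ t - 1 →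
      ‖z (t - τ) - z t‖ ≤ η * τ * L * D) :
    ∀ t : ℕ, 1 ≤ t →
      ‖x t - z t‖ ≤ 2 * D * κ * (1 - γ) ^ (t - 1) + 2 * η * κ ^ 2 * L * D / γ ^ 2 := by
  intro t ht
  obtain ⟨n, rfl⟩ : ∃ n, t = n + 1 := ⟨t - 1, by omega⟩
  have hκ := hA.nonneg
  have hinit : ‖(A ^ n) (x 1 - z (n + 1))‖ ≤ 2 * D * κ * (1 - γ) ^ n :=
    calc _ ≤ κ * (1 - γ) ^ n * (D + D) :=
          (ContinuousLinearMap.le_opNorm _ _).trans <| mul_le_mul (hA.norm_pow_le n)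
            ((norm_sub_le _ _).trans (add_le_add hx1 (hzbd _ n.succ_pos))) (norm_nonneg _)
            ((norm_nonneg _).trans (hA.norm_pow_le n))
      _ = 2 * D * κ * (1 - γ) ^ n := by ring
  have hterm : ∀ i ∈ range n, ‖(A ^ i) ((1 - A) (z (n - i) - z (n + 1)))‖ ≤
      2 * η * κ ^ 2 * L * D * ((i + 1) * (1 - γ) ^ i) := by
    intro i hi
    have hz := hzdiff (n + 1) n.succ_pos (i + 1) i.succ_pos (by grind)
    rw [show n + 1 - (i + 1) = n - i by omega] at hz
    calc _ ≤ 2 * κ ^ 2 * (1 - γ) ^ i * (η * (i + 1 : ℕ) * L * D) :=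
          (hA.norm_pow_apply_one_sub_le hγ.le i _).trans (by gcongr)
      _ = _ := by push_cast; ring
  have hseries := sum_range_succ_mul_pow_le (r := 1 - γ) (by linarith) (by linarith) n
  rw [sub_sub_cancel] at hseries
  calc ‖x (n + 1) - z (n + 1)‖
      ≤ ‖(A ^ n) (x 1 - z (n + 1))‖ +
          ∑ i ∈ range n, ‖(A ^ i) ((1 - A) (z (n - i) - z (n + 1)))‖ := by
        rw [sub_eq_pow_apply_add_sum hx]; exact norm_add_le_of_le le_rfl (norm_sum_le _ _)
    _ ≤ 2 * D * κ * (1 - γ) ^ n +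
          ∑ i ∈ range n, 2 * η * κ ^ 2 * L * D * ((i + 1) * (1 - γ) ^ i) :=
        add_le_add hinit (sum_le_sum hterm)
    _ ≤ 2 * D * κ * (1 - γ) ^ n + 2 * η * κ ^ 2 * L * D * (1 / γ ^ 2) := by
        rw [← mul_sum]; gcongr
    _ = _ := by rw [Nat.add_sub_cancel, mul_one_div]

/-- tracking-error norm bound
`‖x_t - z_t‖ ≤ 2Dκ(1-γ)^{t-1} + 2ηκ²LD/γ²`. -/
theorem tracking_error_norm_bound {E : Type*} [NormedAddCommGroup E] [InnerProductSpace ℝ E]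
    [FiniteDimensional ℝ E] {κ γ η L D : ℝ} (hκ : 0 < κ) (hγ : 0 < γ) (hγ1 : γ ≤ 1)
    (hη : 0 < η) (hL : 0 < L) (hD : 0 < D)
    {A : E →L[ℝ] E} (hA : StronglyStable κ γ A)
    (x z : ℕ → E)
    (hx : ∀ t : ℕ, 1 ≤ t → x (t + 1) = A (x t) + ((1 : E →L[ℝ] E) - A) (z t))
    (hx1 : ‖x 1‖ ≤ D) (hzbd : ∀ t : ℕ, 1 ≤ t → ‖z t‖ ≤ D)
    (hzdiff : ∀ t : ℕ, 1 ≤ t → ∀ τ : ℕ, 1 ≤ τ → τ ≤ t - 1 →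
      ‖z (t - τ) - z t‖ ≤ η * τ * L * D) :
    ∀ t : ℕ, 1 ≤ t →
      ‖x t - z t‖ ≤ 2 * D * κ * (1 - γ) ^ (t - 1) + 2 * η * κ ^ 2 * L * D / γ ^ 2 :=
  tracking_error_norm_bound_general hγ hγ1 hη hL hD hA x z hx hx1 hzbd hzdiff
end

section
/- (Theorem 1, general step size.) Let A be a (κ,γ)-strongly stable continuous linear map on a finite-dimensional real inner product space E, let X ⊆ E be nonempty, and let Π : E → E satisfy Π y ∈ X and ‖Π y − x‖ ≤ ‖y − x‖ for all y ∈ E and x ∈ X. Let L > 0, D > 0, η > 0, T ≥ 1, and let (f_t)_{t=1}^T be convex differentiable real-valued functions on E. Suppose the sequences (x_t) and (z_t) satisfy: z_1 ∈ X, z_{t+1} = Π(z_t − η·∇f_t(x_t)), x_{t+1} = A x_t + (I − A) z_t for all 1 ≤ t ≤ T, with ‖x_t‖ ≤ D, ‖z_t‖ ≤ D, and ‖∇f_t(x_t)‖ ≤ L·D for all t. Then for every x* ∈ X with ‖x*‖ ≤ D, Σ_{t=1}^T (f_t(x_t) − f_t(x*)) ≤ 2D²/η + η·L²·D²·T·(1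 + 4κ²)/(2γ²) + 2·L·D²·κ/γ. -/
open Finset RealInnerProductSpace

section

variable {E : Type*} [NormedAddCommGroup E] [InnerProductSpace ℝ E]

theorem ConvexOn.sub_le_inner_gradient [CompleteSpace E] {f : E → ℝ} (hf : ConvexOn ℝ Set.univ f)
    {a : E} (hfa : DifferentiableAt ℝ f a) (b : E) :
    f a - f b ≤ ⟪gradient f a, a - b⟫ := by
  set φ : ℝ →ᵃ[ℝ] E := AffineMap.lineMap a b
  have hline : ConvexOn ℝ Set.univ (f ∘ φ) := by simpa using hf.comp_affineMap φ
  have hderiv : HasDerivAt (f ∘ φ) ⟪gradient f a, b - a⟫ 0 := by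
    have hφ : HasDerivAt φ (b - a) 0 := AffineMap.hasDerivAt_lineMap
    simpa using hfa.hasGradientAt.hasFDerivAt.comp_hasDerivAt_of_eq 0 hφ (by simp [φ])
  have hslope := hline.le_slope_of_hasDerivAt (Set.mem_univ 0) (Set.mem_univ 1) one_pos hderiv
  rw [← neg_sub b a, inner_neg_right]
  simp only [slope_def_field, Function.comp_apply, φ, AffineMap.lineMap_apply_zero,
    AffineMap.lineMap_apply_one, sub_zero, div_one] at hslope
  linarith

theorem ConvexOn.sub_le_inner_gradient_add [CompleteSpace E] {f : E → ℝ} (hf : ConvexOn ℝ Set.univ f)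
    {a : E} (hfa : DifferentiableAt ℝ f a) {G : ℝ} (hG : ‖gradient f a‖ ≤ G) (y z : E) :
    f a - f y ≤ ⟪gradient f a, z - y⟫ + G * ‖a - z‖ := by
  calc f a - f y ≤ ⟪gradient f a, a - y⟫ := hf.sub_le_inner_gradient hfa y
    _ = ⟪gradient f a, z - y⟫ + ⟪gradient f a, a - z⟫ := by
        rw [← inner_add_right, sub_add_sub_cancel']
    _ ≤ ⟪gradient f a, z - y⟫ + G * ‖a - z‖ := by
        gcongr
        exact (real_inner_le_norm _ _).trans (by gcongr)

theorem inner_sub_le_of_norm_sub_le {η : ℝ} (hη : 0 < η) {z z' g y : E}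
    (h : ‖z' - y‖ ≤ ‖z - η • g - y‖) :
    ⟪g, z - y⟫ ≤ (‖z - y‖ ^ 2 - ‖z' - y‖ ^ 2) / (2 * η) + η / 2 * ‖g‖ ^ 2 := by
  have hexpand : ‖z - η • g - y‖ ^ 2 = ‖z - y‖ ^ 2 - 2 * η * ⟪g, z - y⟫ + η ^ 2 * ‖g‖ ^ 2 := by
    rw [sub_right_comm, norm_sub_sq_real, real_inner_smul_right, real_inner_comm, norm_smul,
      Real.norm_of_nonneg hη.le]
    ring
  have hsq := pow_le_pow_left₀ (norm_nonneg _) h 2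
  rw [div_add' _ _ _ (by positivity), le_div_iff₀ (by positivity)]
  nlinarith

theorem sum_inner_sub_le_of_norm_sub_le {η : ℝ} (hη : 0 < η) {T : ℕ} {z g : ℕ → E} {y : E}
    {R G : ℝ} (hR : ‖z 1 - y‖ ≤ R) (hG : ∀ t ∈ Icc 1 T, ‖g t‖ ≤ G)
    (hstep : ∀ t ∈ Icc 1 T, ‖z (t + 1) - y‖ ≤ ‖z t - η • g t - y‖) :
    ∑ t ∈ Icc 1 T, ⟪g t, z t - y⟫ ≤ R ^ 2 / (2 * η) + η / 2 * (T * G ^ 2) := by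
  have htelescope : ∑ t ∈ Icc 1 T, (‖z t - y‖ ^ 2 - ‖z (t + 1) - y‖ ^ 2) =
      ‖z 1 - y‖ ^ 2 - ‖z (T + 1) - y‖ ^ 2 := by
    rw [← Ico_add_one_right_eq_Icc, ← neg_sub (‖z (T + 1) - y‖ ^ 2),
      ← sum_Ico_sub (fun t => ‖z t - y‖ ^ 2) (by omega), ← sum_neg_distrib]
    simp only [neg_sub]
  have hgrad : ∑ t ∈ Icc 1 T, ‖g t‖ ^ 2 ≤ T * G ^ 2 := by
    simpa using sum_le_card_nsmul _ _ _ fun t ht =>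
      pow_le_pow_left₀ (norm_nonneg _) (hG t ht) 2
  calc ∑ t ∈ Icc 1 T, ⟪g t, z t - y⟫
      ≤ ∑ t ∈ Icc 1 T, ((‖z t - y‖ ^ 2 - ‖z (t + 1) - y‖ ^ 2) / (2 * η) + η / 2 * ‖g t‖ ^ 2) :=
        sum_le_sum fun t ht => inner_sub_le_of_norm_sub_le hη (hstep t ht)
    _ = (‖z 1 - y‖ ^ 2 - ‖z (T + 1) - y‖ ^ 2) / (2 * η) + η / 2 * ∑ t ∈ Icc 1 T, ‖g t‖ ^ 2 := by
        rw [sum_add_distrib, ← sum_div, ← mul_sum, htelescope]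
    _ ≤ R ^ 2 / (2 * η) + η / 2 * (T * G ^ 2) := by
        gcongr
        exact (sub_le_self _ (sq_nonneg _)).trans (pow_le_pow_left₀ (norm_nonneg _) hR 2)

theorem norm_proj_iterate_succ_sub_le {X : Set E} {proj : E → E} (hprojX : ∀ y, proj y ∈ X)
    (hproj : ∀ y : E, ∀ x ∈ X, ‖proj y - x‖ ≤ ‖y - x‖) {η G : ℝ} (hη : 0 ≤ η) {T : ℕ}
    {z g : ℕ → E} (hz1 : z 1 ∈ X) (hz : ∀ t, 1 ≤ t → t ≤ T → z (t + 1) = proj (z t - η • g t))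
    (hg : ∀ t ∈ Icc 1 T, ‖g t‖ ≤ G) (t : ℕ) (h1 : 1 ≤ t) (h2 : t < T) :
    ‖z (t + 1) - z t‖ ≤ η * G := by
  have hzt : z t ∈ X := by
    obtain _ | _ | s := t
    · omega
    · exact hz1
    · rw [hz (s + 1) le_add_self (by omega)]
      exact hprojX _
  calc ‖z (t + 1) - z t‖ ≤ ‖z t - η • g t - z t‖ := hz t h1 h2.le ▸ hproj _ _ hzt
    _ = η * ‖g t‖ := by rw [sub_sub_cancel_left, norm_neg, norm_smul, Real.norm_of_nonneg hη]
    _ ≤ η * G := by gcongr; exact hg t (mem_Icc.mpr ⟨h1, h2.le⟩)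

theorem sub_mul_sum_Icc_le_of_le_mul_add {a : ℕ → ℝ} {ρ c : ℝ} (hρ : 0 ≤ ρ) (hc : 0 ≤ c)
    (ha : ∀ t, 0 ≤ a t) {T : ℕ} (hrec : ∀ t, 1 ≤ t → t < T → a (t + 1) ≤ ρ * a t + c) :
    (1 - ρ) * ∑ t ∈ Icc 1 T, a t ≤ a 1 + T * c := by
  rcases Nat.eq_zero_or_pos T with rfl | hT
  · simpa using ha 1
  have key : ∀ n, 1 ≤ n → n ≤ T →
      (1 - ρ) * ∑ t ∈ Icc 1 n, a t + ρ * a n ≤ a 1 + (n - 1) * c := by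
    intro n hn
    induction n, hn using Nat.le_induction with
    | base =>
      intro
      simp only [Icc_self, sum_singleton, Nat.cast_one, sub_self, zero_mul, add_zero]
      linarith
    | succ n hn ih =>
      intro hnT
      rw [sum_Icc_succ_top (by omega)]
      have := hrec n hn (by omega)
      push_cast
      nlinarith [ih (by omega)]
  have := key T hT le_rfl
  nlinarith [ha T]

namespace StronglyStable

variable {κ γ : ℝ} {A : E →L[ℝ] E}

theorem one_le [Nontrivial E] (hA : StronglyStable κ γ A) : 1 ≤ κ := by
  obtain ⟨H, J, -, -, hHκ⟩ := hA
  calc 1 = ‖(H : E →L[ℝ] E).comp (H.symm : E →L[ℝ] E)‖ := by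
        rw [H.coe_comp_coe_symm, ContinuousLinearMap.norm_id]
    _ ≤ ‖(H : E →L[ℝ] E)‖ * ‖(H.symm : E →L[ℝ] E)‖ := ContinuousLinearMap.opNorm_comp_le _ _
    _ ≤ κ := hHκ

theorem sum_norm_sub_le (hA : StronglyStable κ γ A) (hγ : 0 < γ) {x z : ℕ → E} {T : ℕ}
    {δ : ℝ} (hδ : 0 ≤ δ) (hx : ∀ t, 1 ≤ t → t < T → x (t + 1) = A (x t) + (1 - A) (z t))
    (hz : ∀ t, 1 ≤ t → t < T → ‖z (t + 1) - z t‖ ≤ δ) :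
    ∑ t ∈ Icc 1 T, ‖x t - z t‖ ≤ κ * (‖x 1 - z 1‖ + T * δ) / γ := by
  obtain ⟨H, J, rfl, hJ, hHκ⟩ := hA
  set w : ℕ → E := fun t => H.symm (x t - z t)
  have hw : ∀ t, 1 ≤ t → t < T → ‖w (t + 1)‖ ≤ (1 - γ) * ‖w t‖ + ‖(H.symm : E →L[ℝ] E)‖ * δ := by
    intro t h1 h2
    have hstep : w (t + 1) = J (w t) + H.symm (z t - z (t + 1)) := by
      simp only [w, hx t h1 h2, sub_apply, one_apply_eq_self,
        ContinuousLinearMap.comp_apply, map_sub, map_add, ContinuousLinearEquiv.coe_coe,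
        ContinuousLinearEquiv.symm_apply_apply]
      abel
    calc ‖w (t + 1)‖ ≤ ‖J (w t)‖ + ‖H.symm (z t - z (t + 1))‖ := hstep ▸ norm_add_le _ _
      _ ≤ (1 - γ) * ‖w t‖ + ‖(H.symm : E →L[ℝ] E)‖ * δ := by
        gcongr
        · exact J.le_of_opNorm_le hJ _
        · exact (H.symm : E →L[ℝ] E).le_opNorm_of_le (norm_sub_rev (z t) _ ▸ hz t h1 h2)
  have hsum := sub_mul_sum_Icc_le_of_le_mul_add (c := ‖(H.symm : E →L[ℝ] E)‖ * δ)
    ((norm_nonneg J).trans hJ) (by positivity) (fun t => norm_nonneg (w t)) hw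
  have hw1 : ‖w 1‖ ≤ ‖(H.symm : E →L[ℝ] E)‖ * ‖x 1 - z 1‖ := (H.symm : E →L[ℝ] E).le_opNorm _
  have hxz : ∀ t, ‖x t - z t‖ ≤ ‖(H : E →L[ℝ] E)‖ * ‖w t‖ := fun t => by
    simpa [w] using (H : E →L[ℝ] E).le_opNorm (w t)
  calc ∑ t ∈ Icc 1 T, ‖x t - z t‖ ≤ ‖(H : E →L[ℝ] E)‖ * ∑ t ∈ Icc 1 T, ‖w t‖ := by
        rw [mul_sum]; exact sum_le_sum fun t _ => hxz t
    _ ≤ ‖(H : E →L[ℝ] E)‖ * (‖(H.symm : E →L[ℝ] E)‖ * (‖x 1 - z 1‖ + T * δ) / γ) := by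
        gcongr
        rw [le_div_iff₀ hγ]
        linarith
    _ = ‖(H : E →L[ℝ] E)‖ * ‖(H.symm : E →L[ℝ] E)‖ * (‖x 1 - z 1‖ + T * δ) / γ := by ring
    _ ≤ κ * (‖x 1 - z 1‖ + T * δ) / γ := by gcongr

end StronglyStable

end

theorem one_div_two_add_div_le {κ γ : ℝ} (hγ : 0 < γ) (hγ1 : γ ≤ 1) (hκ : 1 ≤ κ) :
    1 / 2 + κ / γ ≤ (1 + 4 * κ ^ 2) / (2 * γ ^ 2) := by
  have hsplit : (1 + 4 * κ ^ 2) / (2 * γ ^ 2) =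
      1 / 2 + κ / γ + (1 - γ ^ 2 + 2 * κ * (2 * κ - γ)) / (2 * γ ^ 2) := by
    field_simp; ring
  rw [hsplit]
  exact le_add_of_nonneg_right (div_nonneg (by nlinarith) (by positivity))

theorem online_linear_control_regret_general_step_general {E : Type*}
    [NormedAddCommGroup E] [InnerProductSpace ℝ E] [FiniteDimensional ℝ E]
    {κ γ L D η : ℝ} (hκ : 0 < κ) (hγ : 0 < γ) (hγ1 : γ ≤ 1) (hL : 0 < L) (hD : 0 < D)
    (hη : 0 < η)
    {A : E →L[ℝ] E} (hA : StronglyStable κ γ A)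
    (X : Set E) (proj : E → E)
    (hprojX : ∀ y : E, proj y ∈ X)
    (hproj : ∀ y : E, ∀ x ∈ X, ‖proj y - x‖ ≤ ‖y - x‖)
    (T : ℕ) (hT : 1 ≤ T) (f : ℕ → E → ℝ)
    (hconv : ∀ t ∈ Finset.Icc 1 T, ConvexOn ℝ Set.univ (f t))
    (hdiff : ∀ t ∈ Finset.Icc 1 T, Differentiable ℝ (f t))
    (x z : ℕ → E) (hz1 : z 1 ∈ X)
    (hzrec : ∀ t : ℕ, 1 ≤ t → t ≤ T → z (t + 1) = proj (z t - η • gradient (f t) (x t)))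
    (hxrec : ∀ t : ℕ, 1 ≤ t → t ≤ T → x (t + 1) = A (x t) + ((1 : E →L[ℝ] E) - A) (z t))
    (hxbd : ∀ t ∈ Finset.Icc 1 T, ‖x t‖ ≤ D)
    (hzbd : ∀ t ∈ Finset.Icc 1 T, ‖z t‖ ≤ D)
    (hgradbd : ∀ t ∈ Finset.Icc 1 T, ‖gradient (f t) (x t)‖ ≤ L * D) :
    ∀ xs ∈ X, ‖xs‖ ≤ D →
      ∑ t ∈ Finset.Icc 1 T, (f t (x t) - f t xs) ≤
        2 * D ^ 2 / η + η * L ^ 2 * D ^ 2 * T * (1 + 4 * κ ^ 2) / (2 * γ ^ 2) +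
          2 * L * D ^ 2 * κ / γ := by
  intro xs hxs hxsD
  -- `1 ≤ κ`, needed for the final constant, holds only on a nontrivial space
  rcases subsingleton_or_nontrivial E with hE | hE
  · simp only [Subsingleton.elim _ xs, sub_self, sum_const_zero]
    positivity
  have hT1 : 1 ∈ Icc 1 T := mem_Icc.mpr ⟨le_rfl, hT⟩
  have hzstep := norm_proj_iterate_succ_sub_le hprojX hproj hη.le hz1 hzrec hgradbd
  have hogd := sum_inner_sub_le_of_norm_sub_le hη (y := xs) (R := 2 * D)
    (by linarith [norm_sub_le (z 1) xs, hzbd 1 hT1]) hgradbd fun t ht => by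
      rw [hzrec t (mem_Icc.mp ht).1 (mem_Icc.mp ht).2]
      exact hproj _ xs hxs
  have htrack := hA.sum_norm_sub_le hγ (by positivity) (fun t h1 h2 => hxrec t h1 h2.le)
    hzstep
  have hxz1 : ‖x 1 - z 1‖ ≤ 2 * D := by
    linarith [norm_sub_le (x 1) (z 1), hxbd 1 hT1, hzbd 1 hT1]
  calc ∑ t ∈ Icc 1 T, (f t (x t) - f t xs)
      ≤ ∑ t ∈ Icc 1 T, ⟪gradient (f t) (x t), z t - xs⟫ + L * D * ∑ t ∈ Icc 1 T, ‖x t - z t‖ := by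
        rw [mul_sum, ← sum_add_distrib]
        exact sum_le_sum fun t ht =>
          (hconv t ht).sub_le_inner_gradient_add (hdiff t ht _) (hgradbd t ht) xs (z t)
    _ ≤ (2 * D) ^ 2 / (2 * η) + η / 2 * (T * (L * D) ^ 2) +
          L * D * (κ * (2 * D + T * (η * (L * D))) / γ) := by
        gcongr
        exact htrack.trans (by gcongr)
    _ = 2 * D ^ 2 / η + η * L ^ 2 * D ^ 2 * T * (1 / 2 + κ / γ) + 2 * L * D ^ 2 * κ / γ := by
        field_simp; ring
    _ ≤ 2 * D ^ 2 / η + η * L ^ 2 * D ^ 2 * T * ((1 + 4 * κ ^ 2) / (2 * γ ^ 2)) +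
          2 * L * D ^ 2 * κ / γ := by
        gcongr
        exact one_div_two_add_div_le hγ hγ1 hA.one_le
    _ = _ := by ring

/-- Theorem 1, general step size: regret bound of the online linear control
algorithm without disturbances, for an arbitrary step size `η`. -/
theorem online_linear_control_regret_general_step {E : Type*}
    [NormedAddCommGroup E] [InnerProductSpace ℝ E] [FiniteDimensional ℝ E]
    {κ γ L D η : ℝ} (hκ : 0 < κ) (hγ : 0 < γ) (hγ1 : γ ≤ 1) (hL : 0 < L) (hD : 0 < D)
    (hη : 0 < η)
    {A : E →L[ℝ] E} (hA : StronglyStable κ γ A)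
    (X : Set E) (hX : X.Nonempty) (proj : E → E)
    (hprojX : ∀ y : E, proj y ∈ X)
    (hproj : ∀ y : E, ∀ x ∈ X, ‖proj y - x‖ ≤ ‖y - x‖)
    (T : ℕ) (hT : 1 ≤ T) (f : ℕ → E → ℝ)
    (hconv : ∀ t ∈ Finset.Icc 1 T, ConvexOn ℝ Set.univ (f t))
    (hdiff : ∀ t ∈ Finset.Icc 1 T, Differentiable ℝ (f t))
    (x z : ℕ → E) (hz1 : z 1 ∈ X)
    (hzrec : ∀ t : ℕ, 1 ≤ t → t ≤ T → z (t + 1) = proj (z t - η • gradient (f t) (x t)))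
    (hxrec : ∀ t : ℕ, 1 ≤ t → t ≤ T → x (t + 1) = A (x t) + ((1 : E →L[ℝ] E) - A) (z t))
    (hxbd : ∀ t ∈ Finset.Icc 1 T, ‖x t‖ ≤ D)
    (hzbd : ∀ t ∈ Finset.Icc 1 T, ‖z t‖ ≤ D)
    (hgradbd : ∀ t ∈ Finset.Icc 1 T, ‖gradient (f t) (x t)‖ ≤ L * D) :
    ∀ xs ∈ X, ‖xs‖ ≤ D →
      ∑ t ∈ Finset.Icc 1 T, (f t (x t) - f t xs) ≤
        2 * D ^ 2 / η + η * L ^ 2 * D ^ 2 * T * (1 + 4 * κ ^ 2) / (2 * γ ^ 2) +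
          2 * L * D ^ 2 * κ / γ :=
  online_linear_control_regret_general_step_general hκ hγ hγ1 hL hD hη hA X proj hprojX hproj T hT f
    hconv hdiff x z hz1 hzrec hxrec hxbd hzbd hgradbd
end

section
/- (Theorem 1: regret bound of the online linear control algorithm without disturbances.) Let A be a (κ,γ)-strongly stable continuous linear map on a finite-dimensional real inner product space E, let X ⊆ E be nonempty, and let Π : E → E satisfy Π y ∈ X and ‖Π y − x‖ ≤ ‖y − x‖ for all y ∈ E and x ∈ X. Let L > 0, D > 0, T ≥ 1, set η = 2γ/(L·√(T·(1 + 4κ²))), and let (f_t)_{t=1}^T be convex differentiable real-valued functions on E. Suppose the sequences (x_t) and (z_t) satisfy: z_1 ∈ X, z_{t+1} = Π(z_t − η·∇f_t(x_t)), x_{t+1} = A x_t + (I − A) z_t for all 1 ≤ t ≤ T, with ‖x_t‖ ≤ D, ‖z_t‖ ≤ D, and ‖∇f_t(x_t)‖ ≤ L·D for all t. Then for every x* ∈ X with ‖x*‖ ≤ D, Σ_{t=1}^T (f_t(x_t) − f_t(x*)) ≤ (2·L·D²/γ)·(√(T·(1 + 4κ²)) + κ). -/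
open Finset RealInnerProductSpace

theorem le_pow_mul_add_div_of_le_mul_add {a : ℕ → ℝ} {ρ c : ℝ} (hρ0 : 0 ≤ ρ) (hρ1 : ρ < 1)
    (hc : 0 ≤ c) {n : ℕ} (h : ∀ t < n, a (t + 1) ≤ ρ * a t + c) :
    ∀ t ≤ n, a t ≤ ρ ^ t * a 0 + c / (1 - ρ) := by
  have hfix : ρ * (c / (1 - ρ)) + c = c / (1 - ρ) := by
    field_simp [(sub_pos.2 hρ1).ne']
    ring
  intro t ht
  induction t with
  | zero => simp [div_nonneg hc (sub_pos.2 hρ1).le]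
  | succ t ih =>
    calc a (t + 1) ≤ ρ * a t + c := h t ht
      _ ≤ ρ * (ρ ^ t * a 0 + c / (1 - ρ)) + c := by gcongr; exact ih (by omega)
      _ = ρ ^ (t + 1) * a 0 + c / (1 - ρ) := by rw [pow_succ]; linear_combination hfix

theorem sum_Icc_pow_sub_one_le {ρ : ℝ} (hρ0 : 0 ≤ ρ) (hρ1 : ρ < 1) (n : ℕ) :
    ∑ t ∈ Icc 1 n, ρ ^ (t - 1) ≤ 1 / (1 - ρ) := by
  have hshift : ∑ t ∈ Icc 1 n, ρ ^ (t - 1) = ∑ i ∈ Ico 0 n, ρ ^ i := by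
    rw [← Ico_add_one_right_eq_Icc, sum_Ico_eq_sum_range, ← range_eq_Ico]
    simp
  simpa [hshift] using geom_sum_Ico_le_of_lt_one (m := 0) (n := n) hρ0 hρ1

theorem regret_bound_of_step_size {κ γ L D η : ℝ} {T : ℕ} (hκ : 1 ≤ κ) (hγ : 0 < γ) (hγ1 : γ ≤ 1)
    (hL : 0 < L) (hT : 1 ≤ T) (hη : η = 2 * γ / (L * √(T * (1 + 4 * κ ^ 2)))) :
    (2 * D) ^ 2 / (2 * η) + ∑ t ∈ Icc 1 T,
        (η / 2 * (L * D) ^ 2 + L * D * (κ * ((1 - γ) ^ (t - 1) * (2 * D) + η * L * D / γ))) ≤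
      2 * L * D ^ 2 / γ * (√(T * (1 + 4 * κ ^ 2)) + κ) := by
  set s := √(T * (1 + 4 * κ ^ 2))
  have hT0 : (1 : ℝ) ≤ T := by exact_mod_cast hT
  have hs : 0 < s := Real.sqrt_pos.2 (by positivity)
  have hs2 : s ^ 2 = T * (1 + 4 * κ ^ 2) := Real.sq_sqrt (by positivity)
  have hgeom : ∑ t ∈ Icc 1 T, (1 - γ) ^ (t - 1) ≤ 1 / γ := by
    simpa using sum_Icc_pow_sub_one_le (ρ := 1 - γ) (by linarith) (by linarith) T
  have hsum : ∑ t ∈ Icc 1 T,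
        (η / 2 * (L * D) ^ 2 + L * D * (κ * ((1 - γ) ^ (t - 1) * (2 * D) + η * L * D / γ))) =
      T * (η * L ^ 2 * D ^ 2 * (γ + 2 * κ) / (2 * γ)) +
        2 * κ * L * D ^ 2 * ∑ t ∈ Icc 1 T, (1 - γ) ^ (t - 1) := by
    rw [show (T : ℝ) * (η * L ^ 2 * D ^ 2 * (γ + 2 * κ) / (2 * γ)) =
        ∑ _t ∈ Icc 1 T, η * L ^ 2 * D ^ 2 * (γ + 2 * κ) / (2 * γ) by simp, mul_sum,
      ← sum_add_distrib]
    refine sum_congr rfl fun t _ ↦ ?_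
    field_simp
    ring
  have hbalance : T * (η * L ^ 2 * D ^ 2 * (γ + 2 * κ) / (2 * γ)) ≤ L * D ^ 2 * s / γ := by
    rw [hη]
    have : T * (γ * (γ + 2 * κ)) ≤ s ^ 2 := by rw [hs2]; gcongr; nlinarith
    field_simp
    nlinarith
  have hfirst : (2 * D) ^ 2 / (2 * η) = L * D ^ 2 * s / γ := by
    rw [hη]; field_simp
  rw [hsum, hfirst]
  have : 2 * κ * L * D ^ 2 * ∑ t ∈ Icc 1 T, (1 - γ) ^ (t - 1) ≤ 2 * κ * L * D ^ 2 * (1 / γ) := by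
    gcongr
  calc _ ≤ L * D ^ 2 * s / γ + L * D ^ 2 * s / γ + 2 * κ * L * D ^ 2 * (1 / γ) := by linarith
    _ = _ := by ring

section InnerProductSpace

variable {E : Type*} [NormedAddCommGroup E] [InnerProductSpace ℝ E]

theorem ConvexOn.sub_le_inner_gradient_s14 [CompleteSpace E] {s : Set E} {φ : E → ℝ} {a b : E}
    (hφ : ConvexOn ℝ s φ) (ha : a ∈ s) (hb : b ∈ s) (hd : DifferentiableAt ℝ φ a) :
    φ a - φ b ≤ ⟪gradient φ a, a - b⟫ := by
  set ℓ : ℝ →ᵃ[ℝ] E := AffineMap.lineMap a b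
  have hderiv : HasDerivAt (φ ∘ ℓ) ⟪gradient φ a, b - a⟫ 0 := by
    have hfd := hd.hasGradientAt.hasFDerivAt
    rw [← AffineMap.lineMap_apply_zero a b (k := ℝ)] at hfd
    simpa using hfd.comp_hasDerivAt (0 : ℝ) AffineMap.hasDerivAt_lineMap
  have hslope := (hφ.comp_affineMap ℓ).le_slope_of_hasDerivAt (by simpa [ℓ]) (by simpa [ℓ])
    one_pos hderiv
  simp only [slope_def_field, Function.comp_apply, ℓ, AffineMap.lineMap_apply_zero,
    AffineMap.lineMap_apply_one, sub_zero, div_one] at hslope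
  rw [← neg_sub b a, inner_neg_right]
  linarith

theorem two_mul_inner_le_of_norm_sub_le {z z' g u : E} {η : ℝ}
    (h : ‖z' - u‖ ≤ ‖z - η • g - u‖) :
    2 * η * ⟪g, z - u⟫ ≤ ‖z - u‖ ^ 2 - ‖z' - u‖ ^ 2 + η ^ 2 * ‖g‖ ^ 2 := by
  have hexpand : ‖z - η • g - u‖ ^ 2 = ‖z - u‖ ^ 2 - 2 * η * ⟪g, z - u⟫ + η ^ 2 * ‖g‖ ^ 2 := by
    rw [sub_right_comm, norm_sub_sq_real, inner_smul_right, norm_smul, mul_pow,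
      Real.norm_eq_abs, sq_abs, real_inner_comm]
    ring
  nlinarith [pow_le_pow_left₀ (norm_nonneg _) h 2]

theorem two_mul_sum_inner_le_of_norm_sub_le {z g : ℕ → E} {u : E} {η : ℝ} {n : ℕ}
    (hstep : ∀ t ∈ Icc 1 n, ‖z (t + 1) - u‖ ≤ ‖z t - η • g t - u‖) :
    2 * η * ∑ t ∈ Icc 1 n, ⟪g t, z t - u⟫ ≤
      ‖z 1 - u‖ ^ 2 - ‖z (n + 1) - u‖ ^ 2 + η ^ 2 * ∑ t ∈ Icc 1 n, ‖g t‖ ^ 2 := by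
  induction n with
  | zero => simp
  | succ n ih =>
    have hlast := two_mul_inner_le_of_norm_sub_le (hstep (n + 1) (by simp))
    have hprev := ih fun t ht ↦ hstep t (Icc_subset_Icc_right n.le_succ ht)
    rw [sum_Icc_succ_top (by omega), sum_Icc_succ_top (by omega)]
    linarith

theorem sum_sub_le_of_convexOn [CompleteSpace E] {f : ℕ → E → ℝ} {x z : ℕ → E} {u : E} {η : ℝ}
    (hη : 0 < η) {n : ℕ} (hconv : ∀ t ∈ Icc 1 n, ConvexOn ℝ Set.univ (f t))
    (hdiff : ∀ t ∈ Icc 1 n, DifferentiableAt ℝ (f t) (x t))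
    (hstep : ∀ t ∈ Icc 1 n, ‖z (t + 1) - u‖ ≤ ‖z t - η • gradient (f t) (x t) - u‖) :
    ∑ t ∈ Icc 1 n, (f t (x t) - f t u) ≤
      ‖z 1 - u‖ ^ 2 / (2 * η) + ∑ t ∈ Icc 1 n,
        (η / 2 * ‖gradient (f t) (x t)‖ ^ 2 + ‖gradient (f t) (x t)‖ * ‖x t - z t‖) := by
  set g : ℕ → E := fun t ↦ gradient (f t) (x t)
  have hlin : ∀ t ∈ Icc 1 n, f t (x t) - f t u ≤ ⟪g t, z t - u⟫ + ‖g t‖ * ‖x t - z t‖ := by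
    intro t ht
    calc f t (x t) - f t u ≤ ⟪g t, x t - u⟫ :=
          (hconv t ht).sub_le_inner_gradient_s14 trivial trivial (hdiff t ht)
      _ = ⟪g t, z t - u⟫ + ⟪g t, x t - z t⟫ := by rw [← inner_add_right, sub_add_sub_cancel']
      _ ≤ ⟪g t, z t - u⟫ + ‖g t‖ * ‖x t - z t‖ := by gcongr; exact real_inner_le_norm _ _
  have hogd : ∑ t ∈ Icc 1 n, ⟪g t, z t - u⟫ ≤
      ‖z 1 - u‖ ^ 2 / (2 * η) + η / 2 * ∑ t ∈ Icc 1 n, ‖g t‖ ^ 2 := by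
    have := two_mul_sum_inner_le_of_norm_sub_le hstep
    rw [div_add' _ _ _ (by positivity), le_div_iff₀ (by positivity)]
    nlinarith [sq_nonneg ‖z (n + 1) - u‖]
  calc _ ≤ ∑ t ∈ Icc 1 n, (⟪g t, z t - u⟫ + ‖g t‖ * ‖x t - z t‖) := sum_le_sum hlin
    _ ≤ _ := by rw [sum_add_distrib, sum_add_distrib, ← mul_sum]; linarith

theorem norm_projected_step_le {X : Set E} {proj : E → E} (hprojX : ∀ y : E, proj y ∈ X)
    (hproj : ∀ y : E, ∀ x ∈ X, ‖proj y - x‖ ≤ ‖y - x‖) {z g : ℕ → E} {η : ℝ} (hη : 0 ≤ η)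
    {T : ℕ} (hz1 : z 1 ∈ X) (hzrec : ∀ t : ℕ, 1 ≤ t → t ≤ T → z (t + 1) = proj (z t - η • g t)) :
    ∀ t : ℕ, 1 ≤ t → t ≤ T → ‖z (t + 1) - z t‖ ≤ η * ‖g t‖ := by
  have hzX : ∀ t, 1 ≤ t → t ≤ T → z t ∈ X := by
    rintro (_ | _ | t) ht1 htT
    · omega
    · exact hz1
    · rw [hzrec (t + 1) (by omega) (by omega)]; exact hprojX _
  intro t ht1 htT
  rw [hzrec t ht1 htT]
  simpa [norm_smul, Real.norm_of_nonneg hη] using hproj (z t - η • g t) (z t) (hzX t ht1 htT)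

variable {κ γ : ℝ} {A : E →L[ℝ] E}

theorem StronglyStable.one_le_s14 [Nontrivial E] (hA : StronglyStable κ γ A) : 1 ≤ κ := by
  obtain ⟨H, J, -, -, hκ⟩ := hA
  exact H.one_le_norm_mul_norm_symm.trans hκ

theorem StronglyStable.norm_le_of_eq_add (hA : StronglyStable κ γ A) (hγ : 0 < γ)
    {e d : ℕ → E} {δ : ℝ} (hδ : 0 ≤ δ) {n : ℕ} (he : ∀ t < n, e (t + 1) = A (e t) + d t)
    (hd : ∀ t < n, ‖d t‖ ≤ δ) :
    ∀ t ≤ n, ‖e t‖ ≤ κ * ((1 - γ) ^ t * ‖e 0‖ + δ / γ) := by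
  obtain ⟨H, J, rfl, hJ, hκ⟩ := hA
  set h := ‖(H : E →L[ℝ] E)‖
  set h' := ‖(H.symm : E →L[ℝ] E)‖
  have hρ0 : 0 ≤ 1 - γ := (norm_nonneg J).trans hJ
  have hw : ∀ t < n, ‖H.symm (e (t + 1))‖ ≤ (1 - γ) * ‖H.symm (e t)‖ + h' * δ := by
    intro t ht
    have hrec : H.symm (e (t + 1)) = J (H.symm (e t)) + H.symm (d t) := by
      simp [he t ht]
    rw [hrec]
    refine (norm_add_le _ _).trans (add_le_add ?_ ?_)
    · exact (J.le_opNorm _).trans (by gcongr)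
    · exact ((H.symm : E →L[ℝ] E).le_opNorm _).trans (by gcongr; exact hd t ht)
  intro t ht
  have hwt := le_pow_mul_add_div_of_le_mul_add (a := fun t ↦ ‖H.symm (e t)‖) hρ0
    (by linarith) (by positivity : 0 ≤ h' * δ) hw t ht
  rw [sub_sub_cancel] at hwt
  have he0 : ‖H.symm (e 0)‖ ≤ h' * ‖e 0‖ := (H.symm : E →L[ℝ] E).le_opNorm _
  calc ‖e t‖ = ‖H (H.symm (e t))‖ := by rw [H.apply_symm_apply]
    _ ≤ h * ‖H.symm (e t)‖ := (H : E →L[ℝ] E).le_opNorm _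
    _ ≤ h * ((1 - γ) ^ t * (h' * ‖e 0‖) + h' * δ / γ) := by gcongr; exact hwt.trans (by gcongr)
    _ = h * h' * ((1 - γ) ^ t * ‖e 0‖ + δ / γ) := by ring
    _ ≤ κ * ((1 - γ) ^ t * ‖e 0‖ + δ / γ) := by gcongr

theorem StronglyStable.tracking_error_le (hA : StronglyStable κ γ A) (hγ : 0 < γ)
    {x z : ℕ → E} {δ : ℝ} (hδ : 0 ≤ δ) {T : ℕ}
    (hxrec : ∀ t : ℕ, 1 ≤ t → t ≤ T → x (t + 1) = A (x t) + ((1 : E →L[ℝ] E) - A) (z t))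
    (hz : ∀ t : ℕ, 1 ≤ t → t ≤ T → ‖z (t + 1) - z t‖ ≤ δ) :
    ∀ t ∈ Icc 1 T, ‖x t - z t‖ ≤ κ * ((1 - γ) ^ (t - 1) * ‖x 1 - z 1‖ + δ / γ) := by
  have he : ∀ t < T, x (t + 2) - z (t + 2) =
      A (x (t + 1) - z (t + 1)) + (z (t + 1) - z (t + 2)) := by
    intro t ht
    rw [hxrec (t + 1) (by omega) (by omega)]
    simp only [sub_apply, one_apply_eq_self, map_sub]
    abel
  have hd : ∀ t < T, ‖z (t + 1) - z (t + 2)‖ ≤ δ := fun t ht ↦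
    norm_sub_rev (z (t + 1)) _ ▸ hz (t + 1) (by omega) (by omega)
  intro t ht
  obtain ⟨ht1, htT⟩ := mem_Icc.1 ht
  obtain ⟨s, rfl⟩ := Nat.exists_eq_add_of_le' ht1
  simpa using hA.norm_le_of_eq_add (e := fun s ↦ x (s + 1) - z (s + 1)) hγ hδ he hd s (by omega)

end InnerProductSpace

theorem online_linear_control_regret_general {E : Type*}
    [NormedAddCommGroup E] [InnerProductSpace ℝ E] [FiniteDimensional ℝ E]
    {κ γ L D η : ℝ} (hκ : 0 < κ) (hγ : 0 < γ) (hγ1 : γ ≤ 1) (hL : 0 < L) (hD : 0 < D)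
    {A : E →L[ℝ] E} (hA : StronglyStable κ γ A)
    (X : Set E) (proj : E → E)
    (hprojX : ∀ y : E, proj y ∈ X)
    (hproj : ∀ y : E, ∀ x ∈ X, ‖proj y - x‖ ≤ ‖y - x‖)
    (T : ℕ) (hT : 1 ≤ T)
    (hη : η = 2 * γ / (L * Real.sqrt (T * (1 + 4 * κ ^ 2))))
    (f : ℕ → E → ℝ)
    (hconv : ∀ t ∈ Finset.Icc 1 T, ConvexOn ℝ Set.univ (f t))
    (hdiff : ∀ t ∈ Finset.Icc 1 T, Differentiable ℝ (f t))
    (x z : ℕ → E) (hz1 : z 1 ∈ X)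
    (hzrec : ∀ t : ℕ, 1 ≤ t → t ≤ T → z (t + 1) = proj (z t - η • gradient (f t) (x t)))
    (hxrec : ∀ t : ℕ, 1 ≤ t → t ≤ T → x (t + 1) = A (x t) + ((1 : E →L[ℝ] E) - A) (z t))
    (hxbd : ∀ t ∈ Finset.Icc 1 T, ‖x t‖ ≤ D)
    (hzbd : ∀ t ∈ Finset.Icc 1 T, ‖z t‖ ≤ D)
    (hgradbd : ∀ t ∈ Finset.Icc 1 T, ‖gradient (f t) (x t)‖ ≤ L * D) :
    ∀ xs ∈ X, ‖xs‖ ≤ D →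
      ∑ t ∈ Finset.Icc 1 T, (f t (x t) - f t xs) ≤
        2 * L * D ^ 2 / γ * (Real.sqrt (T * (1 + 4 * κ ^ 2)) + κ) := by
  intro u hu huD
  rcases subsingleton_or_nontrivial E with hE | hE
  · rw [sum_eq_zero fun t _ ↦ by rw [Subsingleton.elim (x t) u, sub_self]]
    positivity
  have hη0 : 0 < η := by
    have : (0 : ℝ) < T := by exact_mod_cast hT
    rw [hη]; positivity
  have hzmove : ∀ t, 1 ≤ t → t ≤ T → ‖z (t + 1) - z t‖ ≤ η * L * D := fun t ht1 htT ↦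
    (norm_projected_step_le hprojX hproj hη0.le hz1 hzrec t ht1 htT).trans
      (by rw [mul_assoc]; gcongr; exact hgradbd t (mem_Icc.2 ⟨ht1, htT⟩))
  have hgap := hA.tracking_error_le hγ (by positivity) hxrec hzmove
  have h1 : 1 ∈ Icc 1 T := mem_Icc.2 ⟨le_rfl, hT⟩
  have hx1z1 : ‖x 1 - z 1‖ ≤ 2 * D := by linarith [norm_sub_le (x 1) (z 1), hxbd 1 h1, hzbd 1 h1]
  have hz1u : ‖z 1 - u‖ ≤ 2 * D := by linarith [norm_sub_le (z 1) u, hzbd 1 h1]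
  have hstep : ∀ t ∈ Icc 1 T, ‖z (t + 1) - u‖ ≤ ‖z t - η • gradient (f t) (x t) - u‖ :=
    fun t ht ↦ hzrec t (mem_Icc.1 ht).1 (mem_Icc.1 ht).2 ▸ hproj _ u hu
  calc ∑ t ∈ Icc 1 T, (f t (x t) - f t u)
      ≤ ‖z 1 - u‖ ^ 2 / (2 * η) + ∑ t ∈ Icc 1 T,
          (η / 2 * ‖gradient (f t) (x t)‖ ^ 2 + ‖gradient (f t) (x t)‖ * ‖x t - z t‖) :=
        sum_sub_le_of_convexOn hη0 hconv (fun t ht ↦ (hdiff t ht).differentiableAt) hstep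
    _ ≤ (2 * D) ^ 2 / (2 * η) + ∑ t ∈ Icc 1 T,
          (η / 2 * (L * D) ^ 2 + L * D * (κ * ((1 - γ) ^ (t - 1) * (2 * D) + η * L * D / γ))) := by
        gcongr with t ht
        · exact hgradbd t ht
        · exact hgradbd t ht
        · exact (hgap t ht).trans (by gcongr)
    _ ≤ _ := regret_bound_of_step_size hA.one_le_s14 hγ hγ1 hL hT hη

/-- Theorem 1: regret bound of the online linear control algorithm without
disturbances, with step size `η = 2γ/(L√(T(1+4κ²)))`. -/
theorem online_linear_control_regret {E : Type*}
    [NormedAddCommGroup E] [InnerProductSpace ℝ E] [FiniteDimensional ℝ E]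
    {κ γ L D η : ℝ} (hκ : 0 < κ) (hγ : 0 < γ) (hγ1 : γ ≤ 1) (hL : 0 < L) (hD : 0 < D)
    {A : E →L[ℝ] E} (hA : StronglyStable κ γ A)
    (X : Set E) (hX : X.Nonempty) (proj : E → E)
    (hprojX : ∀ y : E, proj y ∈ X)
    (hproj : ∀ y : E, ∀ x ∈ X, ‖proj y - x‖ ≤ ‖y - x‖)
    (T : ℕ) (hT : 1 ≤ T)
    (hη : η = 2 * γ / (L * Real.sqrt (T * (1 + 4 * κ ^ 2))))
    (f : ℕ → E → ℝ)
    (hconv : ∀ t ∈ Finset.Icc 1 T, ConvexOn ℝ Set.univ (f t))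
    (hdiff : ∀ t ∈ Finset.Icc 1 T, Differentiable ℝ (f t))
    (x z : ℕ → E) (hz1 : z 1 ∈ X)
    (hzrec : ∀ t : ℕ, 1 ≤ t → t ≤ T → z (t + 1) = proj (z t - η • gradient (f t) (x t)))
    (hxrec : ∀ t : ℕ, 1 ≤ t → t ≤ T → x (t + 1) = A (x t) + ((1 : E →L[ℝ] E) - A) (z t))
    (hxbd : ∀ t ∈ Finset.Icc 1 T, ‖x t‖ ≤ D)
    (hzbd : ∀ t ∈ Finset.Icc 1 T, ‖z t‖ ≤ D)
    (hgradbd : ∀ t ∈ Finset.Icc 1 T, ‖gradient (f t) (x t)‖ ≤ L * D) :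
    ∀ xs ∈ X, ‖xs‖ ≤ D →
      ∑ t ∈ Finset.Icc 1 T, (f t (x t) - f t xs) ≤
        2 * L * D ^ 2 / γ * (Real.sqrt (T * (1 + 4 * κ ^ 2)) + κ) :=
  online_linear_control_regret_general hκ hγ hγ1 hL hD hA X proj hprojX hproj T hT hη f hconv hdiff
    x z hz1 hzrec hxrec hxbd hzbd hgradbd
end

section
/- (Proposition 1: equivalence of the original and nominal regrets.) Let A : E →L[ℝ] E and B : F →L[ℝ] E be continuous linear maps between finite-dimensional real inner product spaces, (w_t)_{t≥1} a sequence in E, (u_t)_{t≥1} a sequence in F, and (f_t)_{t=1}^T real-valued functions on E. Let (x_t) satisfy x_{t+1} = A x_t + B u_t + w_t, let (x̄_t) satisfy x̄_1 = x_1 and x̄_{t+1} = A x̄_t + B u_t, and set x^d_t = x_t − x̄_t; define g_t : E → ℝ by g_t(y) = f_t(y + x^d_t). For u ∈ F, let (x_t^u) satisfy x_1^u = x_1 and x_{t+1}^u = A x_t^u + B u + w_t, and let (x̄_t^u) satisfy x̄_1^u = x_1 and x̄_{t+1}^u = A x̄_t^u + B u. Then for every u ∈ F and every T ≥ 1, Σ_{t=1}^T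 f_t(x_t) − Σ_{t=1}^T f_t(x_t^u) = Σ_{t=1}^T g_t(x̄_t) − Σ_{t=1}^T g_t(x̄_t^u); in particular, the constant-input regret of the original problem equals that of the nominal problem. -/
/-- Proposition 1: the constant-input regret of the original (disturbed)
problem equals that of the nominal (disturbance-free) problem with shifted costs
`g_t(y) = f_t(y + x^d_t)`, where `x^d_t = x_t - x̄_t`. -/
theorem original_nominal_regret_equiv {E F : Type*}
    [NormedAddCommGroup E] [InnerProductSpace ℝ E] [FiniteDimensional ℝ E]
    [NormedAddCommGroup F] [InnerProductSpace ℝ F] [FiniteDimensional ℝ F]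
    (A : E →L[ℝ] E) (B : F →L[ℝ] E) (w : ℕ → E) (u : ℕ → F) (f g : ℕ → E → ℝ)
    (x xb : ℕ → E)
    (hx : ∀ t : ℕ, 1 ≤ t → x (t + 1) = A (x t) + B (u t) + w t)
    (hxb1 : xb 1 = x 1)
    (hxb : ∀ t : ℕ, 1 ≤ t → xb (t + 1) = A (xb t) + B (u t))
    (hg : ∀ t : ℕ, ∀ y : E, g t y = f t (y + (x t - xb t)))
    (xu xbu : F → ℕ → E)
    (hxu1 : ∀ uc : F, xu uc 1 = x 1)
    (hxu : ∀ uc : F, ∀ t : ℕ, 1 ≤ t → xu uc (t + 1) = A (xu uc t) + B uc + w t)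
    (hxbu1 : ∀ uc : F, xbu uc 1 = x 1)
    (hxbu : ∀ uc : F, ∀ t : ℕ, 1 ≤ t → xbu uc (t + 1) = A (xbu uc t) + B uc) :
    ∀ uc : F, ∀ T : ℕ, 1 ≤ T →
      (∑ t ∈ Finset.Icc 1 T, f t (x t)) - ∑ t ∈ Finset.Icc 1 T, f t (xu uc t) =
        (∑ t ∈ Finset.Icc 1 T, g t (xb t)) - ∑ t ∈ Finset.Icc 1 T, g t (xbu uc t) := by
  intro uc T hT
  have key : ∀ t : ℕ, 1 ≤ t → xu uc t = xbu uc t + (x t - xb t) := by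
    intro t ht
    induction t with
    | zero => omega
    | succ n ih =>
      rcases Nat.eq_or_lt_of_le ht with h1 | h1
      · simp [← h1, hxu1, hxbu1, hxb1]
      · have hn : 1 ≤ n := by omega
        rw [hxu uc n hn, hxbu uc n hn, ih hn, hx n hn, hxb n hn]
        simp only [map_add, map_sub]
        abel
  have h1 : ∀ t : ℕ, 1 ≤ t → g t (xb t) = f t (x t) := by
    intro t ht; rw [hg]; congr 1; abel
  have h2 : ∀ t : ℕ, 1 ≤ t → g t (xbu uc t) = f t (xu uc t) := by
    intro t ht; rw [hg, key t ht]
  rw [Finset.sum_congr rfl fun t htm => (h1 t (Finset.mem_Icc.mp htm).1).symm,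
    Finset.sum_congr rfl fun t htm => (h2 t (Finset.mem_Icc.mp htm).1).symm]
end
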